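/- arXiv:2508.15585 — 7 statements merged into one kernel-verified Lean document; each statement's English description precedes it below -/
import Mathlib

section
/- For t, θ > 0 and 1 ≤ λ ≤ 1 + t/θ, the function f(x) = √((x−α⁻)(α⁺−x)) / (x·(x + t(λ−1))) integrates over [α⁻, α⁺] (against the factor t/(2πθ)) to give a probability density; i.e., (t/(2πθ)) ∫_{α⁻}^{α⁺} √((x−α⁻)(α⁺−x)) / (x(x+t(λ−1))) dx = 1. -/
open MeasureTheory

open Real

/-- Lower endpoint of the support of the a.c. part of `μ_{t,θ,λ}`. -/
noncomputable def alphaM (t θ lam : ℝ) : ℝ :=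
  θ * (lam + 1) + t - 2 * Real.sqrt (θ * lam * (θ + t))

/-- Upper endpoint of the support of the a.c. part of `μ_{t,θ,λ}`. -/
noncomputable def alphaP (t θ lam : ℝ) : ℝ :=
  θ * (lam + 1) + t + 2 * Real.sqrt (θ * lam * (θ + t))

lemma hasDerivAt_g (a b x : ℝ) (h1 : a < x) (h2 : x < b) :
    HasDerivAt (fun y => Real.sqrt ((y - a) * (b - y)))
      (((a + b) / 2 - x) / Real.sqrt ((x - a) * (b - x))) x := by
  have hpos : 0 < (x - a) * (b - x) := mul_pos (by linarith) (by linarith)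
  have hinner : HasDerivAt (fun y => (y - a) * (b - y)) (a + b - 2 * x) x := by
    have := ((hasDerivAt_id x).sub_const a).mul ((hasDerivAt_const x b).sub (hasDerivAt_id x))
    refine this.congr_deriv (Eq.symm ?_); simp [id]; ring
  have := (Real.hasDerivAt_sqrt (ne_of_gt hpos)).comp x hinner
  refine this.congr_deriv (Eq.symm ?_)
  have hs : Real.sqrt ((x - a) * (b - x)) > 0 := Real.sqrt_pos.mpr hpos
  field_simp

lemma hasDerivAt_asin1 (a b x : ℝ) (h1 : a < x) (h2 : x < b) :
    HasDerivAt (fun y => Real.arcsin ((2*y - a - b) / (b - a)))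
      (1 / Real.sqrt ((x - a) * (b - x))) x := by
  have hba : (0:ℝ) < b - a := by linarith
  set u : ℝ := (2*x - a - b) / (b - a) with hu
  have hu2 : 1 - u^2 = 4 * ((x - a) * (b - x)) / (b - a)^2 := by
    rw [hu]; field_simp; ring
  have hpos : 0 < (x - a) * (b - x) := mul_pos (by linarith) (by linarith)
  have hu2pos : 0 < 1 - u^2 := by rw [hu2]; positivity
  have hne1 : u ≠ 1 := by intro h; rw [h] at hu2pos; norm_num at hu2pos
  have hnen1 : u ≠ -1 := by intro h; rw [h] at hu2pos; norm_num at hu2pos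
  have hinner : HasDerivAt (fun y => (2*y - a - b) / (b - a)) (2 / (b - a)) x := by
    have : HasDerivAt (fun y : ℝ => 2*y - a - b) 2 x := by
      simpa using (((hasDerivAt_id x).const_mul 2).sub_const a).sub_const b
    simpa using this.div_const (b - a)
  have := (Real.hasDerivAt_arcsin hnen1 hne1).comp x hinner
  refine this.congr_deriv (Eq.symm ?_)
  have hsq : Real.sqrt (1 - u^2) = 2 * Real.sqrt ((x - a) * (b - x)) / (b - a) := by
    rw [hu2]
    rw [show 4 * ((x - a) * (b - x)) / (b - a)^2 = (2 * Real.sqrt ((x-a)*(b-x)) / (b-a))^2 by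
      rw [div_pow, mul_pow, Real.sq_sqrt hpos.le]; norm_num]
    exact Real.sqrt_sq (by positivity)
  rw [hsq]
  have hs : Real.sqrt ((x - a) * (b - x)) > 0 := Real.sqrt_pos.mpr hpos
  field_simp

lemma sqrt_helper (A B C : ℝ) (hA : 0 ≤ A) (hB : 0 ≤ B) (hC : 0 < C) :
    Real.sqrt (4 * A * B / C^2) = 2 * Real.sqrt A * Real.sqrt B / C := by
  rw [show 4*A*B/C^2 = (2*Real.sqrt A*Real.sqrt B/C)^2 by
    rw [div_pow, mul_pow, mul_pow, Real.sq_sqrt hA, Real.sq_sqrt hB]; norm_num]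
  exact Real.sqrt_sq (by positivity)

lemma hasDerivAt_asin2 (a b p x : ℝ) (hpa : p < a) (h1 : a < x) (h2 : x < b) :
    HasDerivAt (fun y => Real.arcsin (((a + b - 2*p)*y - 2*a*b + p*(a+b)) / ((b - a)*(y - p))))
      (Real.sqrt ((a-p)*(b-p)) / ((x - p) * Real.sqrt ((x - a) * (b - x)))) x := by
  have hba : (0:ℝ) < b - a := by linarith
  have hxp : (0:ℝ) < x - p := by linarith
  have hqpos : 0 < (a-p)*(b-p) := mul_pos (by linarith) (by linarith)
  have hgpos : 0 < (x - a) * (b - x) := mul_pos (by linarith) (by linarith)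
  have hq : (Real.sqrt ((a-p)*(b-p)))^2 = (a-p)*(b-p) := Real.sq_sqrt hqpos.le
  have hq0 : 0 < Real.sqrt ((a-p)*(b-p)) := Real.sqrt_pos.mpr hqpos
  have hg : (Real.sqrt ((x - a) * (b - x)))^2 = (x - a) * (b - x) := Real.sq_sqrt hgpos.le
  have hg0 : 0 < Real.sqrt ((x - a) * (b - x)) := Real.sqrt_pos.mpr hgpos
  have hD0 : 0 < (b - a)*(x - p) := mul_pos hba hxp
  set u : ℝ := ((a + b - 2*p)*x - 2*a*b + p*(a+b)) / ((b - a)*(x - p)) with hu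
  have hu2 : 1 - u^2 = 4 * ((x - a) * (b - x)) * ((a-p)*(b-p)) / ((b - a)*(x - p))^2 := by
    rw [hu]; field_simp; ring
  have hu2pos : 0 < 1 - u^2 := by rw [hu2]; positivity
  have hne1 : u ≠ 1 := by intro h; rw [h] at hu2pos; norm_num at hu2pos
  have hnen1 : u ≠ -1 := by intro h; rw [h] at hu2pos; norm_num at hu2pos
  have hinner : HasDerivAt (fun y => ((a + b - 2*p)*y - 2*a*b + p*(a+b)) / ((b - a)*(y - p)))
      (2 * ((a-p)*(b-p)) / ((b-a) * (x-p)^2) ) x := by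
    have hN : HasDerivAt (fun y : ℝ => (a + b - 2*p)*y - 2*a*b + p*(a+b)) (a + b - 2*p) x := by
      simpa using (((hasDerivAt_id x).const_mul (a + b - 2*p)).sub_const (2*a*b)).add_const (p*(a+b))
    have hDd : HasDerivAt (fun y : ℝ => (b - a)*(y - p)) (b - a) x := by
      simpa using ((hasDerivAt_id x).sub_const p).const_mul (b - a)
    have := hN.div hDd (ne_of_gt hD0)
    refine this.congr_deriv (Eq.symm ?_)
    field_simp
    ring
  have := (Real.hasDerivAt_arcsin hnen1 hne1).comp x hinner
  refine this.congr_deriv (Eq.symm ?_)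
  have hsq : Real.sqrt (1 - u^2)
      = 2 * Real.sqrt ((x - a) * (b - x)) * Real.sqrt ((a-p)*(b-p)) / ((b - a)*(x - p)) := by
    rw [hu2]; exact sqrt_helper _ _ _ hgpos.le hqpos.le hD0
  rw [hsq]
  field_simp
  linear_combination hq

lemma integral_K (a b p : ℝ) (hab : a < b) (hpa : p < a) :
    ∫ x in a..b, Real.sqrt ((x - a) * (b - x)) / (x - p)
      = Real.pi * ((a + b)/2 - p - Real.sqrt ((a-p)*(b-p))) := by
  set q : ℝ := Real.sqrt ((a-p)*(b-p)) with hqdef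
  set F : ℝ → ℝ := fun y => Real.sqrt ((y - a) * (b - y))
      + ((a+b)/2 - p) * Real.arcsin ((2*y - a - b) / (b - a))
      - q * Real.arcsin (((a + b - 2*p)*y - 2*a*b + p*(a+b)) / ((b - a)*(y - p))) with hF
  have hqpos : 0 < (a-p)*(b-p) := mul_pos (by linarith) (by linarith)
  have hq : q^2 = (a-p)*(b-p) := Real.sq_sqrt hqpos.le
  have hcont : ContinuousOn F (Set.Icc a b) := by
    apply ContinuousOn.sub
    apply ContinuousOn.add
    · exact (continuous_sqrt.comp (by continuity)).continuousOn
    · exact (continuous_const.mul ((Real.continuous_arcsin).comp (by continuity))).continuousOn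
    · apply ContinuousOn.mul continuousOn_const
      apply Real.continuous_arcsin.comp_continuousOn
      apply ContinuousOn.div (by fun_prop) (by fun_prop)
      intro x hx
      have h1 : (0:ℝ) < b - a := by linarith
      have h2 : 0 < x - p := by have := hx.1; linarith
      positivity
  have hderiv : ∀ x ∈ Set.Ioo a b, HasDerivWithinAt F
      (Real.sqrt ((x - a) * (b - x)) / (x - p)) (Set.Ioi x) x := by
    intro x hx
    obtain ⟨h1, h2⟩ := hx
    have hgpos : 0 < (x - a) * (b - x) := mul_pos (by linarith) (by linarith)
    have hg : (Real.sqrt ((x - a) * (b - x)))^2 = (x - a) * (b - x) := Real.sq_sqrt hgpos.le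
    have hg0 : 0 < Real.sqrt ((x - a) * (b - x)) := Real.sqrt_pos.mpr hgpos
    have hxp : 0 < x - p := by linarith
    have hd : HasDerivAt F
        ((((a + b) / 2 - x) / Real.sqrt ((x - a) * (b - x)))
          + ((a+b)/2 - p) * (1 / Real.sqrt ((x - a) * (b - x)))
          - q * (q / ((x - p) * Real.sqrt ((x - a) * (b - x))))) x := by
      exact (((hasDerivAt_g a b x h1 h2).add
        ((hasDerivAt_asin1 a b x h1 h2).const_mul _)).sub
        ((hasDerivAt_asin2 a b p x hpa h1 h2).const_mul q))
    have heq : (((a + b) / 2 - x) / Real.sqrt ((x - a) * (b - x)))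
          + ((a+b)/2 - p) * (1 / Real.sqrt ((x - a) * (b - x)))
          - q * (q / ((x - p) * Real.sqrt ((x - a) * (b - x))))
        = Real.sqrt ((x - a) * (b - x)) / (x - p) := by
      have e1 : (((a + b) / 2 - x) / Real.sqrt ((x - a) * (b - x)))
          + ((a+b)/2 - p) * (1 / Real.sqrt ((x - a) * (b - x)))
          - q * (q / ((x - p) * Real.sqrt ((x - a) * (b - x))))
          = (((a+b)/2 - x)*(x-p) + ((a+b)/2 - p)*(x-p) - q^2)
            / (Real.sqrt ((x - a) * (b - x)) * (x - p)) := by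
        field_simp
      have e2 : ((a+b)/2 - x)*(x-p) + ((a+b)/2 - p)*(x-p) - q^2
          = (Real.sqrt ((x - a) * (b - x)))^2 := by rw [hq, hg]; ring
      rw [e1, e2, sq, mul_div_mul_left _ _ hg0.ne']
    rw [heq] at hd
    exact hd.hasDerivWithinAt
  have hint : IntervalIntegrable (fun x => Real.sqrt ((x - a) * (b - x)) / (x - p))
      volume a b := by
    apply ContinuousOn.intervalIntegrable
    apply ContinuousOn.div (by fun_prop)
    · fun_prop
    · intro x hx
      rw [Set.uIcc_of_le hab.le] at hx
      have := hx.1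
      intro h; have : x = p := by linarith
      linarith [hx.1]
  have := intervalIntegral.integral_eq_sub_of_hasDeriv_right_of_le hab.le hcont hderiv hint
  rw [this, hF]
  have hga : Real.sqrt ((a - a) * (b - a)) = 0 := by simp
  have hgb : Real.sqrt ((b - a) * (b - b)) = 0 := by simp
  have hba : (0:ℝ) < b - a := by linarith
  have hap : (0:ℝ) < a - p := by linarith
  have hbp : (0:ℝ) < b - p := by linarith
  have hua : ((a + b - 2*p)*a - 2*a*b + p*(a+b)) / ((b - a)*(a - p)) = -1 := by
    rw [div_eq_iff (by positivity)]; ring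
  have hub : ((a + b - 2*p)*b - 2*a*b + p*(a+b)) / ((b - a)*(b - p)) = 1 := by
    rw [div_eq_iff (by positivity)]; ring
  have h1a : (2*a - a - b) / (b - a) = -1 := by rw [div_eq_iff (by positivity)]; ring
  have h1b : (2*b - a - b) / (b - a) = 1 := by rw [div_eq_iff (by positivity)]; ring
  simp only [hga, hgb, hua, hub, h1a, h1b, Real.arcsin_one, Real.arcsin_neg_one]
  ring

lemma integrable_edge (a b : ℝ) (hab : a < b) :
    IntervalIntegrable (fun x => Real.sqrt ((x - a) * (b - x)) / (x - a)) volume a b := by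
  have hbase : IntervalIntegrable (fun x : ℝ => x ^ (-(1/2):ℝ)) volume 0 (b - a) :=
    intervalIntegral.intervalIntegrable_rpow' (by norm_num)
  have hshift : IntervalIntegrable (fun x : ℝ => (x - a) ^ (-(1/2):ℝ)) volume a b := by
    have := hbase.comp_sub_right a
    simpa using this
  have hmaj : IntervalIntegrable (fun x : ℝ => Real.sqrt (b - a) * (x - a) ^ (-(1/2):ℝ))
      volume a b := hshift.const_mul _
  apply hmaj.mono_fun
  · apply Measurable.aestronglyMeasurable
    apply Measurable.div
    · exact (continuous_sqrt.comp (by continuity)).measurable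
    · fun_prop
  · filter_upwards [ae_restrict_mem measurableSet_uIoc] with x hx
    rw [Set.uIoc_of_le hab.le] at hx
    obtain ⟨hx1, hx2⟩ := hx
    have hxa : 0 < x - a := by linarith
    have hbx : 0 ≤ b - x := by linarith
    simp only [Real.norm_eq_abs]
    rw [abs_of_nonneg (by positivity), abs_of_nonneg (by positivity)]
    rw [Real.rpow_neg hxa.le, ← Real.sqrt_eq_rpow]
    have e : Real.sqrt ((x-a)*(b-x)) / (x - a) = Real.sqrt (b-x) * (Real.sqrt (x-a))⁻¹ := by
      rw [Real.sqrt_mul hxa.le, mul_comm, mul_div_assoc, Real.sqrt_div_self', one_div]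
    rw [e]
    have hb : Real.sqrt (b-x) ≤ Real.sqrt (b-a) := Real.sqrt_le_sqrt (by linarith)
    exact mul_le_mul_of_nonneg_right hb (by positivity)

lemma integral_K' (a b : ℝ) (hab : a < b) :
    ∫ x in a..b, Real.sqrt ((x - a) * (b - x)) / (x - a) = Real.pi * ((b - a) / 2) := by
  set F : ℝ → ℝ := fun y => Real.sqrt ((y - a) * (b - y))
      + ((b - a)/2) * Real.arcsin ((2*y - a - b) / (b - a)) with hF
  have hcont : ContinuousOn F (Set.Icc a b) := by
    apply ContinuousOn.add
    · exact (continuous_sqrt.comp (by continuity)).continuousOn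
    · exact (continuous_const.mul ((Real.continuous_arcsin).comp (by continuity))).continuousOn
  have hderiv : ∀ x ∈ Set.Ioo a b, HasDerivWithinAt F
      (Real.sqrt ((x - a) * (b - x)) / (x - a)) (Set.Ioi x) x := by
    intro x hx
    obtain ⟨h1, h2⟩ := hx
    have hgpos : 0 < (x - a) * (b - x) := mul_pos (by linarith) (by linarith)
    have hg : (Real.sqrt ((x - a) * (b - x)))^2 = (x - a) * (b - x) := Real.sq_sqrt hgpos.le
    have hg0 : 0 < Real.sqrt ((x - a) * (b - x)) := Real.sqrt_pos.mpr hgpos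
    have hxa : 0 < x - a := by linarith
    have hd : HasDerivAt F
        ((((a + b) / 2 - x) / Real.sqrt ((x - a) * (b - x)))
          + ((b - a)/2) * (1 / Real.sqrt ((x - a) * (b - x)))) x :=
      (hasDerivAt_g a b x h1 h2).add ((hasDerivAt_asin1 a b x h1 h2).const_mul _)
    have heq : (((a + b) / 2 - x) / Real.sqrt ((x - a) * (b - x)))
          + ((b - a)/2) * (1 / Real.sqrt ((x - a) * (b - x)))
        = Real.sqrt ((x - a) * (b - x)) / (x - a) := by
      rw [mul_one_div, ← add_div,
        show (a + b) / 2 - x + (b - a)/2 = b - x by ring,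
        div_eq_div_iff hg0.ne' hxa.ne']
      linear_combination (-1 : ℝ) * hg
    rw [heq] at hd
    exact hd.hasDerivWithinAt
  have := intervalIntegral.integral_eq_sub_of_hasDeriv_right_of_le hab.le hcont hderiv
    (integrable_edge a b hab)
  rw [this, hF]
  have hba : (0:ℝ) < b - a := by linarith
  have hga : Real.sqrt ((a - a) * (b - a)) = 0 := by simp
  have hgb : Real.sqrt ((b - a) * (b - b)) = 0 := by simp
  have h1a : (2*a - a - b) / (b - a) = -1 := by rw [div_eq_iff (by positivity)]; ring
  have h1b : (2*b - a - b) / (b - a) = 1 := by rw [div_eq_iff (by positivity)]; ring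
  simp only [hga, hgb, h1a, h1b, Real.arcsin_one, Real.arcsin_neg_one]
  ring

lemma integral_K2 (a b p : ℝ) (hab : a < b) (hpa : p < a) :
    ∫ x in a..b, Real.sqrt ((x - a) * (b - x)) / (x - p)^2
      = Real.pi * (((a + b)/2 - p) / Real.sqrt ((a-p)*(b-p)) - 1) := by
  set q : ℝ := Real.sqrt ((a-p)*(b-p)) with hqdef
  have hqpos : 0 < (a-p)*(b-p) := mul_pos (by linarith) (by linarith)
  have hq : q^2 = (a-p)*(b-p) := Real.sq_sqrt hqpos.le
  have hq0 : 0 < q := Real.sqrt_pos.mpr hqpos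
  set F : ℝ → ℝ := fun y => -Real.arcsin ((2*y - a - b) / (b - a))
      + (((a+b)/2 - p)/q) * Real.arcsin (((a + b - 2*p)*y - 2*a*b + p*(a+b)) / ((b - a)*(y - p)))
      - Real.sqrt ((y - a) * (b - y)) / (y - p) with hF
  have hcont : ContinuousOn F (Set.Icc a b) := by
    apply ContinuousOn.sub
    apply ContinuousOn.add
    · exact ((Real.continuous_arcsin).comp (by continuity)).continuousOn.neg
    · apply ContinuousOn.mul continuousOn_const
      apply Real.continuous_arcsin.comp_continuousOn
      apply ContinuousOn.div (by fun_prop) (by fun_prop)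
      intro x hx
      have h1 : (0:ℝ) < b - a := by linarith
      have h2 : 0 < x - p := by have := hx.1; linarith
      positivity
    · apply ContinuousOn.div ((continuous_sqrt.comp (by continuity)).continuousOn) (by fun_prop)
      intro x hx
      have h2 : 0 < x - p := by have := hx.1; linarith
      exact h2.ne'
  have hderiv : ∀ x ∈ Set.Ioo a b, HasDerivWithinAt F
      (Real.sqrt ((x - a) * (b - x)) / (x - p)^2) (Set.Ioi x) x := by
    intro x hx
    obtain ⟨h1, h2⟩ := hx
    have hgpos : 0 < (x - a) * (b - x) := mul_pos (by linarith) (by linarith)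
    have hg : (Real.sqrt ((x - a) * (b - x)))^2 = (x - a) * (b - x) := Real.sq_sqrt hgpos.le
    have hg0 : 0 < Real.sqrt ((x - a) * (b - x)) := Real.sqrt_pos.mpr hgpos
    have hxp : 0 < x - p := by linarith
    have hd3 : HasDerivAt (fun y => Real.sqrt ((y - a) * (b - y)) / (y - p))
        (((((a + b) / 2 - x) / Real.sqrt ((x - a) * (b - x))) * (x - p)
          - Real.sqrt ((x - a) * (b - x)) * 1) / (x - p)^2) x :=
      (hasDerivAt_g a b x h1 h2).div ((hasDerivAt_id x).sub_const p) hxp.ne'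
    have hd : HasDerivAt F
        (-(1 / Real.sqrt ((x - a) * (b - x)))
          + (((a+b)/2 - p)/q) * (q / ((x - p) * Real.sqrt ((x - a) * (b - x))))
          - ((((a + b) / 2 - x) / Real.sqrt ((x - a) * (b - x))) * (x - p)
          - Real.sqrt ((x - a) * (b - x)) * 1) / (x - p)^2) x :=
      (((hasDerivAt_asin1 a b x h1 h2).neg.add
        ((hasDerivAt_asin2 a b p x hpa h1 h2).const_mul _)).sub hd3)
    have heq : -(1 / Real.sqrt ((x - a) * (b - x)))
          + (((a+b)/2 - p)/q) * (q / ((x - p) * Real.sqrt ((x - a) * (b - x))))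
          - ((((a + b) / 2 - x) / Real.sqrt ((x - a) * (b - x))) * (x - p)
          - Real.sqrt ((x - a) * (b - x)) * 1) / (x - p)^2
        = Real.sqrt ((x - a) * (b - x)) / (x - p)^2 := by
      field_simp
      ring
    rw [heq] at hd
    exact hd.hasDerivWithinAt
  have hint : IntervalIntegrable (fun x => Real.sqrt ((x - a) * (b - x)) / (x - p)^2)
      volume a b := by
    apply ContinuousOn.intervalIntegrable
    apply ContinuousOn.div ((continuous_sqrt.comp (by continuity)).continuousOn) (by fun_prop)
    intro x hx
    rw [Set.uIcc_of_le hab.le] at hx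
    have h2 : 0 < x - p := by have := hx.1; linarith
    positivity
  have := intervalIntegral.integral_eq_sub_of_hasDeriv_right_of_le hab.le hcont hderiv hint
  rw [this, hF]
  have hba : (0:ℝ) < b - a := by linarith
  have hap : (0:ℝ) < a - p := by linarith
  have hbp : (0:ℝ) < b - p := by linarith
  have hga : Real.sqrt ((a - a) * (b - a)) = 0 := by simp
  have hgb : Real.sqrt ((b - a) * (b - b)) = 0 := by simp
  have hua : ((a + b - 2*p)*a - 2*a*b + p*(a+b)) / ((b - a)*(a - p)) = -1 := by
    rw [div_eq_iff (by positivity)]; ring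
  have hub : ((a + b - 2*p)*b - 2*a*b + p*(a+b)) / ((b - a)*(b - p)) = 1 := by
    rw [div_eq_iff (by positivity)]; ring
  have h1a : (2*a - a - b) / (b - a) = -1 := by rw [div_eq_iff (by positivity)]; ring
  have h1b : (2*b - a - b) / (b - a) = 1 := by rw [div_eq_iff (by positivity)]; ring
  simp only [hga, hgb, hua, hub, h1a, h1b, Real.arcsin_one, Real.arcsin_neg_one]
  field_simp
  ring

set_option maxHeartbeats 1000000 in
theorem stmt1 (t θ lam : ℝ) (ht : 0 < t) (hθ : 0 < θ) (h1 : 1 ≤ lam)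
    (h2 : lam ≤ 1 + t / θ) :
    (t / (2 * Real.pi * θ)) *
      ∫ x in (alphaM t θ lam)..(alphaP t θ lam),
        Real.sqrt ((x - alphaM t θ lam) * (alphaP t θ lam - x)) /
          (x * (x + t * (lam - 1))) = 1 := by
  have hθt : (0:ℝ) < θ + t := by linarith
  have hlam0 : (0:ℝ) < lam := by linarith
  have hD : 0 < θ * lam * (θ + t) := by positivity
  set s : ℝ := Real.sqrt (θ * lam * (θ + t)) with hs
  have hs0 : 0 < s := Real.sqrt_pos.mpr hD
  have hssq : s ^ 2 = θ * lam * (θ + t) := Real.sq_sqrt hD.le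
  have haeq : alphaM t θ lam = θ * (lam + 1) + t - 2 * s := by
    simp only [alphaM, hs]
  have hbeq : alphaP t θ lam = θ * (lam + 1) + t + 2 * s := by
    simp only [alphaP, hs]
  set a : ℝ := alphaM t θ lam with hadef
  set b : ℝ := alphaP t θ lam with hbdef
  have hab : a < b := by rw [haeq, hbeq]; linarith
  clear_value s a b
  have hθlam : θ * (lam - 1) ≤ t := by
    have h' : lam - 1 ≤ t / θ := by linarith
    have := mul_le_mul_of_nonneg_left h' hθ.le
    rw [mul_div_cancel₀ t hθ.ne'] at this
    linarith
  have habmul : a * b = (t - θ * (lam - 1)) ^ 2 := by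
    rw [haeq, hbeq]; linear_combination (-4:ℝ) * hssq
  have ha0 : 0 ≤ a := by
    have e : s = Real.sqrt (θ * lam) * Real.sqrt (θ + t) := by
      rw [hs, Real.sqrt_mul (by positivity)]
    have e1 : (Real.sqrt (θ * lam)) ^ 2 = θ * lam := Real.sq_sqrt (by positivity)
    have e2 : (Real.sqrt (θ + t)) ^ 2 = θ + t := Real.sq_sqrt hθt.le
    rw [haeq]
    nlinarith [sq_nonneg (Real.sqrt (θ * lam) - Real.sqrt (θ + t))]
  have hπ := Real.pi_pos
  have hcontg : Continuous (fun x : ℝ => Real.sqrt ((x - a) * (b - x))) :=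
    Real.continuous_sqrt.comp ((continuous_id.sub continuous_const).mul
      (continuous_const.sub continuous_id))
  rcases eq_or_lt_of_le h1 with hl1 | hl1
  · -- case lam = 1
    subst hl1
    have ha : 0 < a := by
      rw [haeq]
      nlinarith [hssq, hs0]
    have hcongr : ∫ x in a..b, Real.sqrt ((x - a) * (b - x)) / (x * (x + t * (1 - 1)))
        = ∫ x in a..b, Real.sqrt ((x - a) * (b - x)) / (x - 0) ^ 2 := by
      apply intervalIntegral.integral_congr
      intro x _
      norm_num [pow_two]
    rw [hcongr, integral_K2 a b 0 hab ha]
    have hsab : Real.sqrt ((a - 0) * (b - 0)) = t := by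
      rw [sub_zero, sub_zero, habmul, show (t - θ * ((1:ℝ) - 1)) ^ 2 = t ^ 2 by ring,
        Real.sqrt_sq ht.le]
    have hm : (a + b) / 2 - 0 = 2 * θ + t := by rw [haeq, hbeq]; ring
    rw [hsab, hm]
    field_simp
    ring
  · -- case 1 < lam
    have hc : 0 < t * (lam - 1) := by nlinarith
    have hsab : Real.sqrt (a * b) = t - θ * (lam - 1) := by
      rw [habmul, Real.sqrt_sq (by linarith)]
    have habc : (a + t * (lam - 1)) * (b + t * (lam - 1)) = (θ * (lam - 1) + t * lam) ^ 2 := by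
      rw [haeq, hbeq]; linear_combination (-4:ℝ) * hssq
    have hsabc : Real.sqrt ((a + t * (lam - 1)) * (b + t * (lam - 1)))
        = θ * (lam - 1) + t * lam := by
      rw [habc, Real.sqrt_sq (by nlinarith)]
    have hI1 : ∫ x in a..b, Real.sqrt ((x - a) * (b - x)) / x
        = Real.pi * ((a + b) / 2 - Real.sqrt (a * b)) := by
      rcases ha0.lt_or_eq with hpos | hzero
      · have := integral_K a b 0 hab hpos
        simp only [sub_zero] at this
        rw [this]
      · have := integral_K' a b hab
        rw [← hzero] at this ⊢
        simp only [sub_zero, zero_add, zero_mul, Real.sqrt_zero] at this ⊢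
        rw [this]
    have hI2 : ∫ x in a..b, Real.sqrt ((x - a) * (b - x)) / (x + t * (lam - 1))
        = Real.pi * ((a + b) / 2 + t * (lam - 1)
            - Real.sqrt ((a + t * (lam - 1)) * (b + t * (lam - 1)))) := by
      have := integral_K a b (-(t * (lam - 1))) hab (by linarith)
      simp only [sub_neg_eq_add] at this
      rw [this]
    have hint1 : IntervalIntegrable (fun x => Real.sqrt ((x - a) * (b - x)) / x) volume a b := by
      rcases ha0.lt_or_eq with hpos | hzero
      · apply ContinuousOn.intervalIntegrable
        apply ContinuousOn.div hcontg.continuousOn continuousOn_id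
        intro x hx
        rw [Set.uIcc_of_le hab.le] at hx
        have h' := hx.1
        intro hx0
        simp only [id_eq] at hx0
        rw [hx0] at h'
        linarith
      · have := integrable_edge a b hab
        rw [← hzero] at this ⊢
        simpa using this
    have hint2 : IntervalIntegrable (fun x => Real.sqrt ((x - a) * (b - x)) / (x + t * (lam - 1)))
        volume a b := by
      apply ContinuousOn.intervalIntegrable
      apply ContinuousOn.div hcontg.continuousOn
        ((continuous_id.add continuous_const).continuousOn)
      intro x hx
      rw [Set.uIcc_of_le hab.le] at hx
      have h' := hx.1
      have : 0 < x + t * (lam - 1) := by linarith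
      exact this.ne'
    have hcongr : ∫ x in a..b, Real.sqrt ((x - a) * (b - x)) / (x * (x + t * (lam - 1)))
        = ∫ x in a..b, (1 / (t * (lam - 1))) * (Real.sqrt ((x - a) * (b - x)) / x
            - Real.sqrt ((x - a) * (b - x)) / (x + t * (lam - 1))) := by
      apply intervalIntegral.integral_congr
      intro x hx
      rw [Set.uIcc_of_le hab.le] at hx
      rcases (le_trans ha0 hx.1).lt_or_eq with hx0 | hx0
      · have hxc : 0 < x + t * (lam - 1) := by linarith
        field_simp
        ring
      · rw [← hx0]
        have hz : Real.sqrt ((0 - a) * (b - 0)) = 0 := by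
          apply Real.sqrt_eq_zero_of_nonpos
          have hb0 : 0 < b := by linarith
          nlinarith
        simp only [hz]
        simp
    rw [hcongr, intervalIntegral.integral_const_mul,
      intervalIntegral.integral_sub hint1 hint2, hI1, hI2, hsab, hsabc]
    have hlamne : lam - 1 ≠ 0 := ne_of_gt (by linarith)
    field_simp
    ring
end

section
/- For t, θ > 0 and λ > 1 + t/θ, the total mass of the absolutely continuous part of μ_{t,θ,λ} equals t/(θ(λ−1)); equivalently, (t/(2πθ)) ∫_{α⁻}^{α⁺} √((x−α⁻)(α⁺−x)) / (x(x+t(λ−1))) dx = t/(θ(λ−1)). -/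
open MeasureTheory

lemma my_arcsin_deriv (a b p x R : ℝ) (hx : x ∈ Set.Ioo a b) (hp : p < a)
    (hR : 0 < R) (hR2 : (a - p) * (b - p) = R ^ 2) :
    HasDerivAt (fun y => Real.arcsin
        (((a + b - 2*p) * y + (p*(a+b) - 2*(a*b))) / ((b - a) * (y - p))))
      (R / ((x - p) * Real.sqrt ((x - a) * (b - x)))) x := by
  obtain ⟨hxa, hxb⟩ := hx
  have hQ : 0 < (x - a) * (b - x) := mul_pos (by linarith) (by linarith)
  set q := Real.sqrt ((x - a) * (b - x)) with hq
  have hqpos : 0 < q := Real.sqrt_pos.mpr hQ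
  have hq2 : q ^ 2 = (x - a) * (b - x) := Real.sq_sqrt hQ.le
  have hxp : 0 < x - p := by linarith
  have hba : 0 < b - a := by linarith
  have hden : (b - a) * (x - p) ≠ 0 := by positivity
  have h1 : HasDerivAt (fun y => (a + b - 2*p) * y + (p*(a+b) - 2*(a*b))) (a + b - 2*p) x := by
    simpa using ((hasDerivAt_id x).const_mul (a + b - 2*p)).add_const (p*(a+b) - 2*(a*b))
  have h2 : HasDerivAt (fun y => (b - a) * (y - p)) (b - a) x := by
    simpa using ((hasDerivAt_id x).sub_const p).const_mul (b - a)
  have hw : HasDerivAt (fun y => ((a + b - 2*p) * y + (p*(a+b) - 2*(a*b))) / ((b - a) * (y - p)))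
      (((a + b - 2*p) * ((b - a) * (x - p)) -
        ((a + b - 2*p) * x + (p*(a+b) - 2*(a*b))) * (b - a)) / ((b - a) * (x - p)) ^ 2) x :=
    h1.div h2 hden
  set W := ((a + b - 2*p) * x + (p*(a+b) - 2*(a*b))) / ((b - a) * (x - p)) with hW
  have key : 1 - W ^ 2 = ((x - a) * (b - x)) * (2 * R / ((b - a) * (x - p))) ^ 2 := by
    rw [hW]
    field_simp
    linear_combination (4*(x-a)*(b-x)) * hR2
  have hpos : 0 < 1 - W ^ 2 := by rw [key]; positivity
  have hW1 : W ≠ 1 := by intro h; rw [h] at hpos; norm_num at hpos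
  have hWm1 : W ≠ -1 := by intro h; rw [h] at hpos; norm_num at hpos
  have harc := (Real.hasDerivAt_arcsin hWm1 hW1).comp x hw
  have hval : (1 / Real.sqrt (1 - W ^ 2)) *
      (((a + b - 2*p) * ((b - a) * (x - p)) -
        ((a + b - 2*p) * x + (p*(a+b) - 2*(a*b))) * (b - a)) / ((b - a) * (x - p)) ^ 2)
      = R / ((x - p) * q) := by
    have hq0 : q ≠ 0 := hqpos.ne'
    have hxp0 : x - p ≠ 0 := hxp.ne'
    have hba0 : b - a ≠ 0 := hba.ne'
    have hR0 : R ≠ 0 := hR.ne'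
    rw [key, Real.sqrt_mul hQ.le, ← hq, Real.sqrt_sq (by positivity)]
    field_simp
    linear_combination 2 * hR2
  rw [Function.comp_def] at harc
  rw [hval] at harc
  exact harc

lemma my_arcsin_deriv0 (a b x : ℝ) (hx : x ∈ Set.Ioo a b) :
    HasDerivAt (fun y => Real.arcsin ((2*y - (a+b)) / (b - a)))
      (1 / Real.sqrt ((x - a) * (b - x))) x := by
  obtain ⟨hxa, hxb⟩ := hx
  have hba : 0 < b - a := by linarith
  have hQ : 0 < (x - a) * (b - x) := mul_pos (by linarith) (by linarith)
  set q := Real.sqrt ((x - a) * (b - x)) with hq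
  have hqpos : 0 < q := Real.sqrt_pos.mpr hQ
  have hw : HasDerivAt (fun y => (2*y - (a+b)) / (b - a)) (2 / (b - a)) x := by
    simpa using (((hasDerivAt_id x).const_mul 2).sub_const (a+b)).div_const (b - a)
  set W := (2*x - (a+b)) / (b - a) with hW
  have key : 1 - W ^ 2 = ((x - a) * (b - x)) * (2 / (b - a)) ^ 2 := by
    rw [hW]; field_simp; ring
  have hpos : 0 < 1 - W ^ 2 := by rw [key]; positivity
  have hW1 : W ≠ 1 := by intro h; rw [h] at hpos; norm_num at hpos
  have hWm1 : W ≠ -1 := by intro h; rw [h] at hpos; norm_num at hpos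
  have harc := (Real.hasDerivAt_arcsin hWm1 hW1).comp x hw
  have hval : (1 / Real.sqrt (1 - W ^ 2)) * (2 / (b - a)) = 1 / q := by
    rw [key, Real.sqrt_mul hQ.le, ← hq, Real.sqrt_sq (by positivity)]
    field_simp
  rw [Function.comp_def] at harc
  rw [hval] at harc
  exact harc

lemma my_veq (a b c g0 g1 x q : ℝ) (hq : q ≠ 0) (hx : x ≠ 0) (hxc : x + c ≠ 0) (hc : c ≠ 0)
    (h2 : q^2 = (x - a)*(b - x)) (hab : a*b = g0^2) (hac : (a + c)*(b + c) = g1^2) :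
    -(1/q) - g0/c * (g0/((x - 0)*q)) + g1/c * (g1/((x - -c)*q)) = q/(x*(x+c)) := by
  simp only [sub_zero, sub_neg_eq_add]
  field_simp
  linear_combination (x+c) * hab - x * hac - c * h2

theorem stmt2 (t θ lam : ℝ) (ht : 0 < t) (hθ : 0 < θ) (h1 : 1 + t / θ < lam) :
    (t / (2 * Real.pi * θ)) *
      ∫ x in (alphaM t θ lam)..(alphaP t θ lam),
        Real.sqrt ((x - alphaM t θ lam) * (alphaP t θ lam - x)) /
          (x * (x + t * (lam - 1))) = t / (θ * (lam - 1)) := by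
  have hlam : 1 < lam := by
    have : 0 < t / θ := by positivity
    linarith
  simp only [alphaM, alphaP]
  set s := Real.sqrt (θ * lam * (θ + t)) with hs
  set a := θ * (lam + 1) + t - 2 * s with ha'
  set b := θ * (lam + 1) + t + 2 * s with hb'
  set c := t * (lam - 1) with hc'
  set g0 := θ * (lam - 1) - t with hg0'
  set g1 := (lam - 1) * (θ + t) + t with hg1'
  have hg0 : 0 < g0 := by
    have h2 : t / θ < lam - 1 := by linarith
    have h3 : t < (lam - 1) * θ := (div_lt_iff₀ hθ).mp h2
    rw [hg0']; nlinarith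
  have hg1 : 0 < g1 := by
    have := mul_pos (show (0:ℝ) < lam - 1 by linarith) (show (0:ℝ) < θ + t by linarith)
    rw [hg1']; linarith
  have hΘ : 0 < θ * lam * (θ + t) := mul_pos (mul_pos hθ (by linarith)) (by linarith)
  have hs2 : s ^ 2 = θ * lam * (θ + t) := Real.sq_sqrt hΘ.le
  have hspos : 0 < s := Real.sqrt_pos.mpr hΘ
  have hc : 0 < c := mul_pos ht (by linarith)
  have hab2 : a * b = g0 ^ 2 := by
    rw [ha', hb', hg0']; linear_combination (-4) * hs2
  have hacbc : (a + c) * (b + c) = g1 ^ 2 := by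
    rw [ha', hb', hc', hg1']; linear_combination (-4) * hs2
  have hbpos : 0 < b := by rw [hb']; nlinarith
  have ha0 : 0 < a := by nlinarith [mul_pos hg0 hg0]
  have haltb : a < b := by rw [ha', hb']; linarith
  set F : ℝ → ℝ := fun y =>
    -Real.arcsin ((2*y - (a+b)) / (b - a))
      - (g0/c) * Real.arcsin (((a + b - 2*0) * y + (0*(a+b) - 2*(a*b))) / ((b - a) * (y - 0)))
      + (g1/c) * Real.arcsin (((a + b - 2*(-c)) * y + ((-c)*(a+b) - 2*(a*b))) / ((b - a) * (y - (-c)))) with hF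
  have hba : 0 < b - a := by linarith
  have hcont : ContinuousOn F (Set.Icc a b) := by
    have c1 : Continuous fun y : ℝ => Real.arcsin ((2*y - (a+b)) / (b - a)) :=
      Real.continuous_arcsin.comp (by fun_prop)
    have c2 : ContinuousOn (fun y : ℝ =>
        ((a + b - 2*0) * y + (0*(a+b) - 2*(a*b))) / ((b - a) * (y - 0))) (Set.Icc a b) := by
      apply ContinuousOn.div (by fun_prop) (by fun_prop)
      intro x hx
      have hxx : 0 < x := lt_of_lt_of_le ha0 hx.1
      have : (b - a) * (x - 0) ≠ 0 := by simp only [sub_zero]; positivity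
      exact this
    have c3 : ContinuousOn (fun y : ℝ =>
        ((a + b - 2*(-c)) * y + ((-c)*(a+b) - 2*(a*b))) / ((b - a) * (y - (-c)))) (Set.Icc a b) := by
      apply ContinuousOn.div (by fun_prop) (by fun_prop)
      intro x hx
      have hxx : 0 < x := lt_of_lt_of_le ha0 hx.1
      have : (b - a) * (x - (-c)) ≠ 0 := by
        have : 0 < x - (-c) := by simp; linarith
        positivity
      exact this
    exact (((c1.continuousOn.neg).sub
      (continuousOn_const.mul (Real.continuous_arcsin.comp_continuousOn c2))).add
      (continuousOn_const.mul (Real.continuous_arcsin.comp_continuousOn c3)))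
  have hderiv : ∀ x ∈ Set.Ioo a b, HasDerivWithinAt F
      (Real.sqrt ((x - a) * (b - x)) / (x * (x + c))) (Set.Ioi x) x := by
    intro x hx
    obtain ⟨hxa, hxb⟩ := hx
    have hx0 : 0 < x := lt_trans ha0 hxa
    have hxc : 0 < x + c := by linarith
    have hQ : 0 < (x - a) * (b - x) := mul_pos (by linarith) (by linarith)
    set q := Real.sqrt ((x - a) * (b - x)) with hq
    have hqpos : 0 < q := Real.sqrt_pos.mpr hQ
    have hq2 : q ^ 2 = (x - a) * (b - x) := Real.sq_sqrt hQ.le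
    have d1 := my_arcsin_deriv0 a b x ⟨hxa, hxb⟩
    have d2 := my_arcsin_deriv a b 0 x g0 ⟨hxa, hxb⟩ ha0 hg0 (by simpa using hab2)
    have d3 := my_arcsin_deriv a b (-c) x g1 ⟨hxa, hxb⟩ (by linarith) hg1
      (by linear_combination hacbc)
    have D := ((d1.neg).sub (d2.const_mul (g0/c))).add (d3.const_mul (g1/c))
    have hveq : (-(1 / q) - g0/c * (g0 / ((x - 0) * q)) + g1/c * (g1 / ((x - (-c)) * q)))
        = q / (x * (x + c)) :=
      my_veq a b c g0 g1 x q hqpos.ne' hx0.ne' hxc.ne' hc.ne' hq2 hab2 hacbc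
    rw [hF]
    refine HasDerivAt.hasDerivWithinAt ?_
    rw [← hveq]
    exact D
  have hint : IntervalIntegrable
      (fun x => Real.sqrt ((x - a) * (b - x)) / (x * (x + c))) volume a b := by
    apply ContinuousOn.intervalIntegrable
    apply ContinuousOn.div
    · exact Real.continuous_sqrt.comp_continuousOn (by fun_prop)
    · fun_prop
    · intro x hx
      rw [Set.uIcc_of_le haltb.le] at hx
      have hx0 : 0 < x := lt_of_lt_of_le ha0 hx.1
      have hxc : 0 < x + c := by linarith
      positivity
  rw [intervalIntegral.integral_eq_sub_of_hasDeriv_right_of_le haltb.le hcont hderiv hint]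
  have hba0 : b - a ≠ 0 := hba.ne'
  have e1 : (2*b - (a+b)) / (b - a) = 1 := by rw [div_eq_iff hba0]; ring
  have e2 : (2*a - (a+b)) / (b - a) = -1 := by rw [div_eq_iff hba0]; ring
  have e3 : ((a + b - 2*0) * b + (0*(a+b) - 2*(a*b))) / ((b - a) * (b - 0)) = 1 := by
    rw [div_eq_iff (mul_ne_zero hba0 (by rw [sub_zero]; exact hbpos.ne'))]; ring
  have e4 : ((a + b - 2*0) * a + (0*(a+b) - 2*(a*b))) / ((b - a) * (a - 0)) = -1 := by
    rw [div_eq_iff (mul_ne_zero hba0 (by rw [sub_zero]; exact ha0.ne'))]; ring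
  have hbc : 0 < b - (-c) := by simp; linarith
  have hac : 0 < a - (-c) := by simp; linarith
  have e5 : ((a + b - 2*(-c)) * b + ((-c)*(a+b) - 2*(a*b))) / ((b - a) * (b - (-c))) = 1 := by
    rw [div_eq_iff (mul_ne_zero hba0 hbc.ne')]; ring
  have e6 : ((a + b - 2*(-c)) * a + ((-c)*(a+b) - 2*(a*b))) / ((b - a) * (a - (-c))) = -1 := by
    rw [div_eq_iff (mul_ne_zero hba0 hac.ne')]; ring
  rw [hF]
  simp only [e1, e2, e3, e4, e5, e6, Real.arcsin_one, Real.arcsin_neg_one]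
  rw [hg0', hg1', hc']
  have hπ : Real.pi ≠ 0 := Real.pi_ne_zero
  have hl0 : lam - 1 ≠ 0 := by linarith
  field_simp
  ring
end

section
/- For t, θ > 0 and 1 ≤ λ < 1 + t/θ, the cubic polynomial k(x) = 2x³ − 3(α⁺+α⁻)x² + (4α⁺α⁻ − t(λ−1)(α⁺+α⁻))x + 2α⁺α⁻ t(λ−1) is strictly decreasing on (α⁻, α⁺), satisfies k(α⁻) > 0 and k(α⁺) < 0, and hence has a unique zero in (α⁻, α⁺). -/
/-- The cubic numerator of the derivative of the density of `μ_{t,θ,λ}`. -/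
noncomputable def kpoly (t θ lam x : ℝ) : ℝ :=
  2 * x ^ 3 - 3 * (alphaP t θ lam + alphaM t θ lam) * x ^ 2 +
    (4 * alphaP t θ lam * alphaM t θ lam -
      t * (lam - 1) * (alphaP t θ lam + alphaM t θ lam)) * x +
    2 * alphaP t θ lam * alphaM t θ lam * t * (lam - 1)

theorem stmt3 (t θ lam : ℝ) (ht : 0 < t) (hθ : 0 < θ) (h1 : 1 ≤ lam)
    (h2 : lam < 1 + t / θ) :
    StrictAntiOn (kpoly t θ lam) (Set.Ioo (alphaM t θ lam) (alphaP t θ lam)) ∧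
    0 < kpoly t θ lam (alphaM t θ lam) ∧
    kpoly t θ lam (alphaP t θ lam) < 0 ∧
    ∃! x, x ∈ Set.Ioo (alphaM t θ lam) (alphaP t θ lam) ∧ kpoly t θ lam x = 0 := by
  have hlam0 : (0:ℝ) < lam := lt_of_lt_of_le one_pos h1
  set s : ℝ := Real.sqrt (θ * lam * (θ + t)) with hs
  have hsq : s ^ 2 = θ * lam * (θ + t) := Real.sq_sqrt (by positivity)
  have hspos : 0 < s := Real.sqrt_pos.mpr (by positivity)
  have hθt : θ * (lam - 1) < t := by
    have h2' : lam - 1 < t / θ := by linarith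
    have := (sub_lt_iff_lt_add).mpr (by linarith : lam < t / θ + 1)
    calc θ * (lam - 1) < θ * (t / θ) := by
          exact mul_lt_mul_of_pos_left h2' hθ
      _ = t := by field_simp
  set A := alphaM t θ lam with hA
  set B := alphaP t θ lam with hB
  have hAdef : A = θ * (lam + 1) + t - 2 * s := rfl
  have hBdef : B = θ * (lam + 1) + t + 2 * s := rfl
  have hprod : B * A = (t - θ * (lam - 1)) ^ 2 := by
    rw [hAdef, hBdef]; linear_combination (-4 : ℝ) * hsq
  have hprodpos : 0 < B * A := by
    rw [hprod]
    have h5 : 0 < t - θ * (lam - 1) := by linarith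
    positivity
  have hBpos : 0 < B := by rw [hBdef]; nlinarith
  have hApos : 0 < A := by nlinarith
  have hAB : A < B := by rw [hAdef, hBdef]; linarith
  have hτ : 0 ≤ t * (lam - 1) := by nlinarith
  -- values at the endpoints
  have hkM : kpoly t θ lam A = A * (A + t * (lam - 1)) * (B - A) := by
    unfold kpoly; rw [← hA, ← hB]; ring
  have hkP : kpoly t θ lam B = -(B * (B + t * (lam - 1)) * (B - A)) := by
    unfold kpoly; rw [← hA, ← hB]; ring
  have hkMpos : 0 < kpoly t θ lam A := by
    rw [hkM]
    have : 0 < A + t * (lam - 1) := by linarith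
    have : 0 < B - A := by linarith
    positivity
  have hkPneg : kpoly t θ lam B < 0 := by
    rw [hkP]
    have h3 : 0 < B + t * (lam - 1) := by linarith
    have h4 : 0 < B - A := by linarith
    have := mul_pos (mul_pos hBpos h3) h4
    linarith
  -- derivative
  have hderiv : ∀ x : ℝ, HasDerivAt (kpoly t θ lam)
      (6 * x ^ 2 - 6 * (B + A) * x +
        (4 * B * A - t * (lam - 1) * (B + A))) x := by
    intro x
    have h := ((((hasDerivAt_pow 3 x).const_mul (2:ℝ)).sub
      ((hasDerivAt_pow 2 x).const_mul (3 * (B + A)))).add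
      ((hasDerivAt_id x).const_mul (4 * B * A - t * (lam - 1) * (B + A)))).add_const
      (2 * B * A * t * (lam - 1))
    have heq : kpoly t θ lam = fun x =>
        2 * x ^ 3 - 3 * (B + A) * x ^ 2 +
          (4 * B * A - t * (lam - 1) * (B + A)) * x +
          2 * B * A * t * (lam - 1) := by
      funext y; unfold kpoly; rw [← hA, ← hB]
    rw [heq]
    exact h.congr_deriv (by push_cast; ring)
  have hcont : ContinuousOn (kpoly t θ lam) (Set.Icc A B) :=
    (fun x _ => ((hderiv x).differentiableAt.continuousAt.continuousWithinAt))
  have hanti : StrictAntiOn (kpoly t θ lam) (Set.Ioo A B) := by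
    apply strictAntiOn_of_deriv_neg (convex_Ioo A B)
    · exact fun x _ => ((hderiv x).differentiableAt.continuousAt.continuousWithinAt)
    · intro x hx
      rw [interior_Ioo] at hx
      rw [(hderiv x).deriv]
      obtain ⟨hx1, hx2⟩ := hx
      nlinarith [mul_pos (sub_pos.mpr hx1) (sub_pos.mpr hx2)]
  refine ⟨hanti, hkMpos, hkPneg, ?_⟩
  have h0mem : (0:ℝ) ∈ Set.Ioo (kpoly t θ lam B) (kpoly t θ lam A) :=
    ⟨hkPneg, hkMpos⟩
  obtain ⟨x, hx, hx0⟩ := intermediate_value_Ioo' (le_of_lt hAB) hcont h0mem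
  exact ⟨x, ⟨hx, hx0⟩, fun y ⟨hy, hy0⟩ => hanti.injOn hy hx (by rw [hy0, hx0])⟩
end

section
/- For t, θ > 0 and 1 ≤ λ < 1 + t/θ, the measure μ_{t,θ,λ} is unimodal: its density f(x) = (t/(2πθ))·√((x−α⁻)(α⁺−x))/(x(x+t(λ−1))) on (α⁻, α⁺) is strictly increasing on (α⁻, x₀) and strictly decreasing on (x₀, α⁺) for some x₀ ∈ (α⁻, α⁺). -/
/-- The density of `μ_{t,θ,λ}` on `(α⁻, α⁺)`. -/
noncomputable def dens (t θ lam x : ℝ) : ℝ :=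
  (t / (2 * Real.pi * θ)) *
    Real.sqrt ((x - alphaM t θ lam) * (alphaP t θ lam - x)) /
    (x * (x + t * (lam - 1)))

/-- The cubic governing the sign of the derivative of the squared density. -/
def Rcub (a b c x : ℝ) : ℝ :=
  2 * x ^ 3 - 3 * (a + b) * x ^ 2 + (4 * a * b - c * (a + b)) * x + 2 * a * b * c

lemma Rcub_hasDerivAt (a b c x : ℝ) :
    HasDerivAt (Rcub a b c) (6 * x ^ 2 - 6 * (a + b) * x + (4 * a * b - c * (a + b))) x := by
  have h := (((hasDerivAt_pow 3 x).const_mul 2).sub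
      ((hasDerivAt_pow 2 x).const_mul (3 * (a + b)))).add
      (((hasDerivAt_id x).const_mul (4 * a * b - c * (a + b))).add_const (2 * a * b * c))
  convert h using 1
  · rfl
  · rfl
  · funext y; simp [Rcub]; ring
  · push_cast; ring

lemma Rcub_continuous (a b c : ℝ) : Continuous (Rcub a b c) := by
  unfold Rcub; continuity

lemma Rcub_anti (a b c : ℝ) (ha : 0 < a) (hab : a < b) (hc : 0 ≤ c) :
    StrictAntiOn (Rcub a b c) (Set.Icc a b) := by
  apply strictAntiOn_of_deriv_neg (convex_Icc a b) (Rcub_continuous a b c).continuousOn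
  intro x hx
  rw [interior_Icc] at hx
  rw [(Rcub_hasDerivAt a b c x).deriv]
  nlinarith [mul_pos (sub_pos.2 hx.1) (sub_pos.2 hx.2), mul_pos ha (ha.trans hab),
    mul_nonneg hc (by linarith : (0:ℝ) ≤ a + b)]

lemma gfun_hasDerivAt (a b c x : ℝ) (hx : 0 < x * (x + c)) :
    HasDerivAt (fun y => (y - a) * (b - y) / (y * (y + c)) ^ 2)
      (x * (x + c) * Rcub a b c x / ((x * (x + c)) ^ 2) ^ 2) x := by
  have hN : HasDerivAt (fun y : ℝ => (y - a) * (b - y)) (1 * (b - x) + (x - a) * (0 - 1)) x :=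
    ((hasDerivAt_id x).sub_const a).mul ((hasDerivAt_const x b).sub (hasDerivAt_id x))
  have hD : HasDerivAt (fun y : ℝ => (y * (y + c)) ^ 2)
      (2 * (x * (x + c)) * (2 * x + c)) x := by
    have h := ((hasDerivAt_id' (x := x)).mul ((hasDerivAt_id' (x := x)).add_const c)).pow 2
    convert h using 1
    · rfl
    · rfl
    · rfl
    simp only [Pi.mul_apply]; ring
  have hD0 : (x * (x + c)) ^ 2 ≠ 0 := pow_ne_zero 2 (ne_of_gt hx)
  have h := hN.div hD hD0
  convert h using 1
  · rfl
  · rfl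
  · rfl
  rw [div_eq_div_iff (by positivity) (by positivity)]
  unfold Rcub; ring

/-- Main auxiliary unimodality lemma for `C √((x-a)(b-x)) / (x(x+c))`. -/
lemma aux_unimodal (a b c C : ℝ) (ha : 0 < a) (hab : a < b) (hc : 0 ≤ c) (hC : 0 < C) :
    ∃ x₀ ∈ Set.Ioo a b,
      StrictMonoOn (fun x => C * Real.sqrt ((x - a) * (b - x)) / (x * (x + c))) (Set.Ioo a x₀) ∧
      StrictAntiOn (fun x => C * Real.sqrt ((x - a) * (b - x)) / (x * (x + c))) (Set.Ioo x₀ b) := by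
  have hb : 0 < b := ha.trans hab
  have hRa : Rcub a b c a = a * (a + c) * (b - a) := by unfold Rcub; ring
  have hRb : Rcub a b c b = -(b * (b + c) * (b - a)) := by unfold Rcub; ring
  have hRapos : 0 < Rcub a b c a := by
    rw [hRa]; exact mul_pos (mul_pos ha (by linarith)) (by linarith)
  have hRbneg : Rcub a b c b < 0 := by
    rw [hRb]
    have : 0 < b * (b + c) * (b - a) := by
      apply mul_pos (mul_pos hb (by linarith)) (by linarith)
    linarith
  -- IVT: find the zero x₀ of Rcub in (a, b)
  have hIVT := intermediate_value_Ioo' hab.le (Rcub_continuous a b c).continuousOn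
  have h0mem : (0 : ℝ) ∈ Set.Ioo (Rcub a b c b) (Rcub a b c a) := ⟨hRbneg, hRapos⟩
  obtain ⟨x₀, hx₀mem, hx₀⟩ := hIVT h0mem
  set g : ℝ → ℝ := fun x => (x - a) * (b - x) / (x * (x + c)) ^ 2 with hgdef
  have hxden : ∀ x ∈ Set.Ioo a b, 0 < x * (x + c) := fun x hx =>
    mul_pos (ha.trans hx.1) (add_pos_of_pos_of_nonneg (ha.trans hx.1) hc)
  have hNpos : ∀ x ∈ Set.Ioo a b, (0:ℝ) ≤ (x - a) * (b - x) := fun x hx =>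
    mul_nonneg (by linarith [hx.1]) (by linarith [hx.2])
  have hfg : ∀ x ∈ Set.Ioo a b,
      C * Real.sqrt ((x - a) * (b - x)) / (x * (x + c)) = C * Real.sqrt (g x) := by
    intro x hx
    rw [hgdef]
    simp only
    rw [Real.sqrt_div (hNpos x hx), Real.sqrt_sq (hxden x hx).le, mul_div_assoc]
  have hgnn : ∀ x ∈ Set.Ioo a b, 0 ≤ g x := fun x hx =>
    div_nonneg (hNpos x hx) (sq_nonneg _)
  have hmemL : ∀ x ∈ Set.Ioo a x₀, x ∈ Set.Ioo a b := fun x hx =>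
    ⟨hx.1, hx.2.trans hx₀mem.2⟩
  have hmemR : ∀ x ∈ Set.Ioo x₀ b, x ∈ Set.Ioo a b := fun x hx =>
    ⟨hx₀mem.1.trans hx.1, hx.2⟩
  have hRanti := Rcub_anti a b c ha hab hc
  have hx₀Icc : x₀ ∈ Set.Icc a b := ⟨hx₀mem.1.le, hx₀mem.2.le⟩
  have hgmono : StrictMonoOn g (Set.Ioo a x₀) := by
    apply strictMonoOn_of_deriv_pos (convex_Ioo a x₀)
    · intro x hx
      exact (gfun_hasDerivAt a b c x (hxden x (hmemL x hx))).continuousAt.continuousWithinAt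
    · intro x hx
      rw [interior_Ioo] at hx
      have hx' := hmemL x hx
      rw [(gfun_hasDerivAt a b c x (hxden x hx')).deriv]
      apply div_pos
      · apply mul_pos (hxden x hx')
        have := hRanti ⟨hx'.1.le, hx'.2.le⟩ hx₀Icc hx.2
        rw [hx₀] at this; exact this
      · exact pow_pos (pow_pos (hxden x hx') 2) 2
  have hganti : StrictAntiOn g (Set.Ioo x₀ b) := by
    apply strictAntiOn_of_deriv_neg (convex_Ioo x₀ b)
    · intro x hx
      exact (gfun_hasDerivAt a b c x (hxden x (hmemR x hx))).continuousAt.continuousWithinAt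
    · intro x hx
      rw [interior_Ioo] at hx
      have hx' := hmemR x hx
      rw [(gfun_hasDerivAt a b c x (hxden x hx')).deriv]
      apply div_neg_of_neg_of_pos
      · have := hRanti hx₀Icc ⟨hx'.1.le, hx'.2.le⟩ hx.1
        rw [hx₀] at this
        exact mul_neg_of_pos_of_neg (hxden x hx') this
      · exact pow_pos (pow_pos (hxden x hx') 2) 2
  refine ⟨x₀, hx₀mem, ?_, ?_⟩
  · intro x hx y hy hxy
    show C * Real.sqrt ((x - a) * (b - x)) / (x * (x + c)) <
      C * Real.sqrt ((y - a) * (b - y)) / (y * (y + c))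
    rw [hfg x (hmemL x hx), hfg y (hmemL y hy)]
    exact mul_lt_mul_of_pos_left
      (Real.sqrt_lt_sqrt (hgnn x (hmemL x hx)) (hgmono hx hy hxy)) hC
  · intro x hx y hy hxy
    show C * Real.sqrt ((y - a) * (b - y)) / (y * (y + c)) <
      C * Real.sqrt ((x - a) * (b - x)) / (x * (x + c))
    rw [hfg x (hmemR x hx), hfg y (hmemR y hy)]
    exact mul_lt_mul_of_pos_left
      (Real.sqrt_lt_sqrt (hgnn y (hmemR y hy)) (hganti hx hy hxy)) hC

theorem stmt4 (t θ lam : ℝ) (ht : 0 < t) (hθ : 0 < θ) (h1 : 1 ≤ lam)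
    (h2 : lam < 1 + t / θ) :
    ∃ x₀ ∈ Set.Ioo (alphaM t θ lam) (alphaP t θ lam),
      StrictMonoOn (dens t θ lam) (Set.Ioo (alphaM t θ lam) x₀) ∧
      StrictAntiOn (dens t θ lam) (Set.Ioo x₀ (alphaP t θ lam)) := by
  have hs0 : (0:ℝ) ≤ θ * lam * (θ + t) := by positivity
  have hs2 : Real.sqrt (θ * lam * (θ + t)) ^ 2 = θ * lam * (θ + t) := Real.sq_sqrt hs0
  have hspos : 0 < Real.sqrt (θ * lam * (θ + t)) :=
    Real.sqrt_pos.2 (by nlinarith [mul_pos hθ (add_pos hθ ht)])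
  have hkey : 0 < t - θ * (lam - 1) := by
    have h := (lt_div_iff₀ hθ).1 (show lam - 1 < t / θ by linarith)
    nlinarith [h]
  have ha : 0 < alphaM t θ lam := by
    unfold alphaM
    have h4 : (2 * Real.sqrt (θ * lam * (θ + t))) ^ 2 < (θ * (lam + 1) + t) ^ 2 := by
      nlinarith [sq_nonneg (t - θ * (lam - 1)), mul_pos hkey hkey]
    have := lt_of_pow_lt_pow_left₀ 2 (by positivity) h4
    linarith
  have hab : alphaM t θ lam < alphaP t θ lam := by
    unfold alphaM alphaP; linarith
  have hc : (0:ℝ) ≤ t * (lam - 1) := by nlinarith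
  have hC : 0 < t / (2 * Real.pi * θ) := by
    apply div_pos ht
    positivity
  obtain ⟨x₀, hmem, hmono, hanti⟩ :=
    aux_unimodal (alphaM t θ lam) (alphaP t θ lam) (t * (lam - 1)) (t / (2 * Real.pi * θ))
      ha hab hc hC
  exact ⟨x₀, hmem, hmono, hanti⟩
end

section
/- For t, θ > 0 and λ > 1, if X and Y are independent random variables with X ~ Gamma(t/(θ(λ−1)), 1) and Y ~ Gamma(1 + t/θ, 1), then the random variable t(λ−1)·X/Y has density ((t(λ−1))^{1+t/θ} / B(t/(θ(λ−1)), 1+t/θ)) · x^{−1+t/(θ(λ−1))} · (x + t(λ−1))^{−1−tλ/(θ(λ−1))} on (0,∞). -/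
open MeasureTheory ProbabilityTheory Real Set
open scoped ENNReal

namespace Stmt7Aux

lemma lintegral_scale (f : ℝ → ℝ≥0∞) (hf : Measurable f) (k : ℝ) (hk : 0 < k) :
    ∫⁻ x, f x ∂volume = ∫⁻ u, f (k * u) * ENNReal.ofReal k ∂volume := by
  rw [lintegral_mul_const' _ _ (by simp)]
  have h1 : ∫⁻ u, f (k * u) ∂volume = ∫⁻ x, f x ∂(Measure.map (k * ·) volume) := by
    rw [lintegral_map hf (measurable_const_mul k)]
  rw [h1, Real.map_volume_mul_left hk.ne', lintegral_smul_measure, smul_eq_mul, mul_right_comm,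
    ← ENNReal.ofReal_mul (by positivity), abs_of_pos (by positivity),
    inv_mul_cancel₀ hk.ne', ENNReal.ofReal_one, one_mul]

lemma real_key (a b c u y : ℝ) (ha : 0 < a) (hb : 1 < b) (hc : 0 < c) (hu : 0 < u)
    (hy : 0 ≤ y) :
    gammaPDFReal b 1 y * (gammaPDFReal a 1 (y / c * u) * (y / c)) =
      c ^ b * (Real.Gamma (a + b) / (Real.Gamma a * Real.Gamma b)) * u ^ (a - 1) *
        (u + c) ^ (-(a + b)) * gammaPDFReal (a + b) (1 + u / c) y := by
  have hGa := Real.Gamma_pos_of_pos ha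
  have hGb := Real.Gamma_pos_of_pos (by linarith : (0:ℝ) < b)
  have hGab := Real.Gamma_pos_of_pos (by linarith : (0:ℝ) < a + b)
  have huc : 0 < u + c := by linarith
  rcases eq_or_lt_of_le hy with h0 | hy
  · subst h0
    simp [gammaPDFReal, Real.zero_rpow (by linarith : (0:ℝ) < a + b - 1).ne']
  · rw [gammaPDFReal, if_pos hy.le, gammaPDFReal, if_pos (by positivity : (0:ℝ) ≤ y / c * u),
      gammaPDFReal, if_pos hy.le, Real.one_rpow, Real.one_rpow]
    have h1 : (1 : ℝ) + u / c = (u + c) / c := by field_simp; ring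
    have h2 : (y / c * u) ^ (a - 1) = y ^ (a - 1) * u ^ (a - 1) / c ^ (a - 1) := by
      rw [div_mul_eq_mul_div, Real.div_rpow (by positivity) hc.le, Real.mul_rpow hy.le hu.le]
    have h3 : ((u + c) / c) ^ (a + b) = (u + c) ^ (a + b) / c ^ (a + b) := by
      rw [Real.div_rpow huc.le hc.le]
    have h4 : Real.exp (-(1 * y)) * Real.exp (-(1 * (y / c * u))) =
        Real.exp (-((u + c) / c * y)) := by
      rw [← Real.exp_add]; congr 1; field_simp; ring
    have h5 : y ^ (a + b - 1) = y ^ (b - 1) * y ^ (a - 1) * y := by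
      rw [show a + b - 1 = b - 1 + (a - 1) + 1 by ring, Real.rpow_add hy, Real.rpow_add hy,
        Real.rpow_one]
    have h6 : c ^ (a + b) = c ^ (a - 1) * c ^ b * c := by
      rw [show a + b = a - 1 + b + 1 by ring, Real.rpow_add hc, Real.rpow_add hc,
        Real.rpow_one]
    have h7 : (u + c) ^ (-(a + b)) = ((u + c) ^ (a + b))⁻¹ := Real.rpow_neg huc.le _
    have hV : (0:ℝ) < (u + c) ^ (a + b) := Real.rpow_pos_of_pos huc _
    have hW : (0:ℝ) < c ^ (a - 1) := Real.rpow_pos_of_pos hc _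
    have hCb : (0:ℝ) < c ^ b := Real.rpow_pos_of_pos hc _
    rw [h1, h2, h3, h5, h6, h7, ← h4]
    field_simp

lemma gammaPDF_nonpos_eq_zero {b y : ℝ} (hb : 1 < b) (hy : y ≤ 0) : gammaPDF b 1 y = 0 := by
  rcases lt_or_eq_of_le hy with hy' | hy'
  · exact gammaPDF_of_neg hy'
  · subst hy'
    rw [gammaPDF_of_nonneg le_rfl]
    simp [Real.zero_rpow (by linarith : (0:ℝ) < b - 1).ne']

lemma inner_eval (a b c u : ℝ) (ha : 0 < a) (hb : 1 < b) (hc : 0 < c) (hu : u ≠ 0) :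
    ∫⁻ y, gammaPDF b 1 y * (gammaPDF a 1 (y / c * u) * ENNReal.ofReal (y / c)) ∂volume =
      ENNReal.ofReal (if 0 < u then
        c ^ b * (Real.Gamma (a + b) / (Real.Gamma a * Real.Gamma b)) * u ^ (a - 1) *
          (u + c) ^ (-(a + b)) else 0) := by
  have hGa := Real.Gamma_pos_of_pos ha
  have hGb := Real.Gamma_pos_of_pos (by linarith : (0:ℝ) < b)
  have hGab := Real.Gamma_pos_of_pos (by linarith : (0:ℝ) < a + b)
  rcases hu.lt_or_gt with hu' | hu'
  · rw [if_neg (by linarith), ENNReal.ofReal_zero, ← lintegral_zero]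
    refine lintegral_congr fun y => ?_
    rcases lt_trichotomy y 0 with hy | hy | hy
    · rw [gammaPDF_of_neg hy, zero_mul]
    · subst hy; simp
    · rw [gammaPDF_of_neg (show y / c * u < 0 from
        mul_neg_of_pos_of_neg (div_pos hy hc) hu')]
      simp
  · rw [if_pos hu']
    have huc : (0:ℝ) < u + c := by linarith
    have hD : (0:ℝ) ≤ c ^ b * (Real.Gamma (a + b) / (Real.Gamma a * Real.Gamma b)) *
        u ^ (a - 1) * (u + c) ^ (-(a + b)) := by positivity
    have hpt : ∀ y : ℝ, gammaPDF b 1 y * (gammaPDF a 1 (y / c * u) * ENNReal.ofReal (y / c)) =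
        ENNReal.ofReal (c ^ b * (Real.Gamma (a + b) / (Real.Gamma a * Real.Gamma b)) *
          u ^ (a - 1) * (u + c) ^ (-(a + b))) * gammaPDF (a + b) (1 + u / c) y := by
      intro y
      rcases lt_or_ge y 0 with hy | hy
      · rw [gammaPDF_of_neg hy, gammaPDF_of_neg hy, zero_mul, mul_zero]
      · rw [gammaPDF, gammaPDF, gammaPDF,
          ← ENNReal.ofReal_mul (gammaPDFReal_nonneg ha one_pos _),
          ← ENNReal.ofReal_mul (gammaPDFReal_nonneg (by linarith : (0:ℝ) < b) one_pos _),
          ← ENNReal.ofReal_mul hD]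
        exact congrArg ENNReal.ofReal (real_key a b c u y ha hb hc hu' hy)
    simp_rw [hpt]
    rw [lintegral_const_mul' _ _ ENNReal.ofReal_ne_top,
      lintegral_gammaPDF_eq_one (by linarith : (0:ℝ) < a + b) (by positivity), mul_one]

lemma gamma_ratio_law (a b c : ℝ) (ha : 0 < a) (hb : 1 < b) (hc : 0 < c)
    {Ω : Type*} [MeasureSpace Ω] [IsProbabilityMeasure (ℙ : Measure Ω)]
    (X Y : Ω → ℝ) (hX : Measurable X) (hY : Measurable Y) (hind : IndepFun X Y)
    (hXd : Measure.map X ℙ = gammaMeasure a 1) (hYd : Measure.map Y ℙ = gammaMeasure b 1) :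
    Measure.map (fun ω => c * X ω / Y ω) ℙ =
      volume.withDensity (fun u => ENNReal.ofReal (if 0 < u then
        c ^ b * (Real.Gamma (a + b) / (Real.Gamma a * Real.Gamma b)) * u ^ (a - 1) *
          (u + c) ^ (-(a + b)) else 0)) := by
  have hb0 : (0:ℝ) < b := by linarith
  haveI : IsProbabilityMeasure (gammaMeasure a 1) := isProbabilityMeasure_gammaMeasure ha one_pos
  haveI : IsProbabilityMeasure (gammaMeasure b 1) := isProbabilityMeasure_gammaMeasure hb0 one_pos
  have hg : Measurable (fun p : ℝ × ℝ => c * p.1 / p.2) :=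
    (measurable_fst.const_mul c).div measurable_snd
  have hprod : Measure.map (fun ω => (X ω, Y ω)) ℙ =
      (gammaMeasure a 1).prod (gammaMeasure b 1) := by
    rw [← hXd, ← hYd]
    exact (indepFun_iff_map_prod_eq_prod_map_map hX.aemeasurable hY.aemeasurable).mp hind
  have hmap : Measure.map (fun ω => c * X ω / Y ω) ℙ =
      Measure.map (fun p : ℝ × ℝ => c * p.1 / p.2) ((gammaMeasure a 1).prod (gammaMeasure b 1)) := by
    rw [← hprod, Measure.map_map hg (hX.prodMk hY)]; rfl
  rw [hmap]
  ext s hs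
  rw [Measure.map_apply hg hs, Measure.prod_apply_symm (hg hs), withDensity_apply _ hs]
  have haeb : ∀ᵐ y ∂(gammaMeasure b 1), 0 < y := by
    rw [ae_iff]
    have : {y : ℝ | ¬ 0 < y} = Iic 0 := by ext y; simp
    rw [this, gammaMeasure, withDensity_apply _ measurableSet_Iic,
      setLIntegral_congr_fun measurableSet_Iic
        (fun y (hy : y ∈ Iic 0) => gammaPDF_nonpos_eq_zero hb hy), lintegral_zero]
  have hfiber : ∀ y : ℝ, 0 < y →
      (gammaMeasure a 1) ((fun x => (x, y)) ⁻¹' ((fun p : ℝ × ℝ => c * p.1 / p.2) ⁻¹' s)) =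
        ∫⁻ u in s, gammaPDF a 1 (y / c * u) * ENNReal.ofReal (y / c) ∂volume := by
    intro y hy
    have hset : ((fun x => (x, y)) ⁻¹' ((fun p : ℝ × ℝ => c * p.1 / p.2) ⁻¹' s)) =
        (fun x : ℝ => c * x / y) ⁻¹' s := rfl
    have hms : Measurable (fun x : ℝ => c * x / y) := (measurable_id.const_mul c).div_const y
    rw [hset, gammaMeasure, withDensity_apply _ (hms hs), ← lintegral_indicator (hms hs)]
    have hf : Measurable (((fun x : ℝ => c * x / y) ⁻¹' s).indicator (gammaPDF a 1)) :=
      ((measurable_gammaPDFReal a 1).ennreal_ofReal).indicator (hms hs)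
    rw [lintegral_scale _ hf (y / c) (by positivity), ← lintegral_indicator hs]
    refine lintegral_congr fun u => ?_
    have hmem : (y / c * u) ∈ (fun x : ℝ => c * x / y) ⁻¹' s ↔ u ∈ s := by
      simp only [mem_preimage]
      rw [show c * (y / c * u) / y = u by field_simp]
    by_cases hus : u ∈ s
    · rw [Set.indicator_of_mem (hmem.mpr hus), Set.indicator_of_mem hus]
    · rw [Set.indicator_of_notMem (fun h => hus (hmem.mp h)),
        Set.indicator_of_notMem hus, zero_mul]
  rw [lintegral_congr_ae (haeb.mono fun y hy => hfiber y hy)]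
  rw [show gammaMeasure b 1 = volume.withDensity (gammaPDF b 1) from rfl]
  have hFm : Measurable (Function.uncurry fun y u : ℝ =>
      gammaPDF a 1 (y / c * u) * ENNReal.ofReal (y / c)) := by
    exact (((measurable_gammaPDFReal a 1).comp
      ((measurable_fst.div_const c).mul measurable_snd)).ennreal_ofReal).mul
      (measurable_fst.div_const c).ennreal_ofReal
  have hGm : Measurable fun y : ℝ =>
      ∫⁻ u in s, gammaPDF a 1 (y / c * u) * ENNReal.ofReal (y / c) ∂volume :=
    Measurable.lintegral_prod_right hFm
  rw [lintegral_withDensity_eq_lintegral_mul _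
    (show Measurable (gammaPDF b 1) from (measurable_gammaPDFReal b 1).ennreal_ofReal) hGm]
  simp only [Pi.mul_apply]
  conv_lhs =>
    enter [2, y]
    rw [← lintegral_const_mul' (gammaPDF b 1 y) _ (show gammaPDF b 1 y ≠ ⊤ from
      ENNReal.ofReal_ne_top)]
  rw [lintegral_lintegral_swap]
  · have h0 : ∀ᵐ u ∂(volume.restrict s), u ≠ 0 := by
      refine ae_restrict_of_ae ?_
      rw [ae_iff]
      have : {u : ℝ | ¬ u ≠ 0} = {0} := by ext u; simp
      rw [this]
      exact measure_singleton 0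
    exact lintegral_congr_ae (h0.mono fun u hu => inner_eval a b c u ha hb hc hu)
  · exact (((measurable_gammaPDFReal b 1).comp measurable_fst).ennreal_ofReal.mul
      (hFm)).aemeasurable

end Stmt7Aux

theorem stmt7 (t θ lam : ℝ) (ht : 0 < t) (hθ : 0 < θ) (hlam : 1 < lam)
    {Ω : Type*} [MeasureSpace Ω] [IsProbabilityMeasure (ℙ : Measure Ω)]
    (X Y : Ω → ℝ) (hX : Measurable X) (hY : Measurable Y)
    (hind : IndepFun X Y)
    (hXd : Measure.map X ℙ = gammaMeasure (t / (θ * (lam - 1))) 1)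
    (hYd : Measure.map Y ℙ = gammaMeasure (1 + t / θ) 1) :
    Measure.map (fun ω => t * (lam - 1) * X ω / Y ω) ℙ =
      volume.withDensity (fun x => ENNReal.ofReal (if 0 < x then
        ((t * (lam - 1)) ^ (1 + t / θ) /
            (Real.Gamma (t / (θ * (lam - 1))) * Real.Gamma (1 + t / θ) /
              Real.Gamma (t / (θ * (lam - 1)) + (1 + t / θ)))) *
          x ^ (-1 + t / (θ * (lam - 1))) *
          (x + t * (lam - 1)) ^ (-1 - t * lam / (θ * (lam - 1)))
        else 0)) := by
  have hl1 : (0:ℝ) < lam - 1 := by linarith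
  have ha : (0:ℝ) < t / (θ * (lam - 1)) := by positivity
  have hb : (1:ℝ) < 1 + t / θ := by
    have h : (0:ℝ) < t / θ := by positivity
    linarith
  have hc : (0:ℝ) < t * (lam - 1) := by positivity
  rw [Stmt7Aux.gamma_ratio_law (t / (θ * (lam - 1))) (1 + t / θ) (t * (lam - 1)) ha hb hc
    X Y hX hY hind hXd hYd]
  congr 1
  funext x
  have e1 : (-1 : ℝ) + t / (θ * (lam - 1)) = t / (θ * (lam - 1)) - 1 := by ring
  have e2 : (-1 : ℝ) - t * lam / (θ * (lam - 1)) =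
      -(t / (θ * (lam - 1)) + (1 + t / θ)) := by
    field_simp
    ring
  have e3 : (t * (lam - 1)) ^ (1 + t / θ) /
      (Real.Gamma (t / (θ * (lam - 1))) * Real.Gamma (1 + t / θ) /
        Real.Gamma (t / (θ * (lam - 1)) + (1 + t / θ))) =
      (t * (lam - 1)) ^ (1 + t / θ) *
        (Real.Gamma (t / (θ * (lam - 1)) + (1 + t / θ)) /
          (Real.Gamma (t / (θ * (lam - 1))) * Real.Gamma (1 + t / θ))) := by
    rw [div_div_eq_mul_div, mul_div_assoc]
  rw [e1, e2, e3]
end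

section
/- For t, θ > 0 and λ > 1, the density p(x) = ((t(λ−1))^{1+t/θ}/B(t/(θ(λ−1)), 1+t/θ)) · x^{−1+t/(θ(λ−1))}(x+t(λ−1))^{−1−tλ/(θ(λ−1))} on (0,∞) satisfies p'(x)/p(x) + ((x + t(λ−1)/2) − t²(λ+1)/(2(2θ+t))) / ((θ/(2θ+t))(x + t(λ−1)/2)² − t²θ(λ−1)²/(4(2θ+t))) = 0 for all x > 0. -/
/-- The density of the Gibbs measure `ρ_{t,θ,λ}` for `λ > 1` (a scaled beta prime
distribution). -/
noncomputable def gibbsDens (t θ lam x : ℝ) : ℝ :=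
  ((t * (lam - 1)) ^ (1 + t / θ) /
      (Real.Gamma (t / (θ * (lam - 1))) * Real.Gamma (1 + t / θ) /
        Real.Gamma (t / (θ * (lam - 1)) + (1 + t / θ)))) *
    x ^ (-1 + t / (θ * (lam - 1))) *
    (x + t * (lam - 1)) ^ (-1 - t * lam / (θ * (lam - 1)))

theorem stmt9 (t θ lam : ℝ) (ht : 0 < t) (hθ : 0 < θ) (hlam : 1 < lam) :
    ∀ x > 0, deriv (gibbsDens t θ lam) x / gibbsDens t θ lam x +
      ((x + t * (lam - 1) / 2) - t ^ 2 * (lam + 1) / (2 * (2 * θ + t))) /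
        ((θ / (2 * θ + t)) * (x + t * (lam - 1) / 2) ^ 2 -
          t ^ 2 * θ * (lam - 1) ^ 2 / (4 * (2 * θ + t))) = 0 := by
  intro x hx
  have hlam1 : 0 < lam - 1 := by linarith
  have hc : 0 < t * (lam - 1) := by positivity
  have hxc : 0 < x + t * (lam - 1) := by linarith
  set a : ℝ := -1 + t / (θ * (lam - 1)) with ha
  set b : ℝ := -1 - t * lam / (θ * (lam - 1)) with hb
  set C : ℝ := (t * (lam - 1)) ^ (1 + t / θ) /
      (Real.Gamma (t / (θ * (lam - 1))) * Real.Gamma (1 + t / θ) /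
        Real.Gamma (t / (θ * (lam - 1)) + (1 + t / θ))) with hC
  have hC0 : 0 < C := by
    apply div_pos (Real.rpow_pos_of_pos hc _)
    apply div_pos
    · exact mul_pos (Real.Gamma_pos_of_pos (by positivity)) (Real.Gamma_pos_of_pos (by positivity))
    · exact Real.Gamma_pos_of_pos (by positivity)
  have h1 : HasDerivAt (fun y : ℝ => y ^ a) (a * x ^ (a - 1)) x :=
    Real.hasDerivAt_rpow_const (Or.inl hx.ne')
  have h2 : HasDerivAt (fun y : ℝ => (y + t * (lam - 1)) ^ b)
      (b * (x + t * (lam - 1)) ^ (b - 1)) x := by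
    have := (Real.hasDerivAt_rpow_const (p := b) (Or.inl hxc.ne')).comp x
      ((hasDerivAt_id x).add_const (t * (lam - 1)))
    rw [mul_one] at this
    exact this
  have hfun : gibbsDens t θ lam = fun y : ℝ =>
      C * y ^ a * (y + t * (lam - 1)) ^ b := by
    funext y
    simp [gibbsDens, ← hC, ← ha, ← hb]
  have hd : HasDerivAt (gibbsDens t θ lam)
      (C * (a * x ^ (a - 1)) * (x + t * (lam - 1)) ^ b +
        C * x ^ a * (b * (x + t * (lam - 1)) ^ (b - 1))) x := by
    rw [hfun]
    exact (h1.const_mul C).mul h2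
  rw [hd.deriv]
  have hxa : (0:ℝ) < x ^ a := Real.rpow_pos_of_pos hx _
  have hxcb : (0:ℝ) < (x + t * (lam - 1)) ^ b := Real.rpow_pos_of_pos hxc _
  have e1 : x ^ (a - 1) = x ^ a / x := Real.rpow_sub_one hx.ne' a
  have e2 : (x + t * (lam - 1)) ^ (b - 1) = (x + t * (lam - 1)) ^ b / (x + t * (lam - 1)) :=
    Real.rpow_sub_one hxc.ne' b
  have key : (C * (a * x ^ (a - 1)) * (x + t * (lam - 1)) ^ b +
        C * x ^ a * (b * (x + t * (lam - 1)) ^ (b - 1))) / gibbsDens t θ lam x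
      = a / x + b / (x + t * (lam - 1)) := by
    rw [e1, e2]
    have : gibbsDens t θ lam x = C * x ^ a * (x + t * (lam - 1)) ^ b := by
      simp [gibbsDens, ← hC, ← ha, ← hb]
    rw [this]
    field_simp
  rw [key, ha, hb]
  have h2θt : (0:ℝ) < 2 * θ + t := by linarith
  have hden : (θ / (2 * θ + t)) * (x + t * (lam - 1) / 2) ^ 2 -
      t ^ 2 * θ * (lam - 1) ^ 2 / (4 * (2 * θ + t))
      = θ * x * (x + t * (lam - 1)) / (2 * θ + t) := by
    field_simp
    ring
  rw [hden]
  field_simp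
  ring
end

section
/- The function S(z) = (t − θz)/(t(t + θ(λ−1)z)) satisfies R(z·S(z)) = z for z in a punctured neighborhood of 0 in (−1, 0), where R(w) = t·(1 + θ(1−λ)w − √((1 + θ(1−λ)w)² − 4θw))/(2θ). -/
theorem stmt12 (t θ lam : ℝ) (ht : 0 < t) (hθ : 0 < θ) (hlam : 1 ≤ lam) :
    ∃ ε > 0, ε ≤ 1 ∧ ∀ z ∈ Set.Ioo (-ε) (0 : ℝ),
      (fun w => t * (1 + θ * (1 - lam) * w -
          Real.sqrt ((1 + θ * (1 - lam) * w) ^ 2 - 4 * θ * w)) / (2 * θ))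
        (z * ((t - θ * z) / (t * (t + θ * (lam - 1) * z)))) = z := by
  have hd1 : 0 < 2 * θ * (lam - 1) + 1 := by nlinarith
  refine ⟨min 1 (t / (2 * θ * (lam - 1) + 1)), lt_min one_pos (div_pos ht hd1),
    min_le_left _ _, ?_⟩
  rintro z ⟨hz1, hz2⟩
  have hzt : -(t / (2 * θ * (lam - 1) + 1)) < z :=
    lt_of_le_of_lt (neg_le_neg (min_le_right _ _)) hz1
  have hzt' : -z * (2 * θ * (lam - 1) + 1) < t := by
    rw [neg_lt] at hzt
    calc -z * (2 * θ * (lam - 1) + 1)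
        < t / (2 * θ * (lam - 1) + 1) * (2 * θ * (lam - 1) + 1) := by
          exact mul_lt_mul_of_pos_right hzt hd1
      _ = t := by field_simp
  have hθlam : 0 ≤ θ * (lam - 1) := mul_nonneg hθ.le (by linarith)
  have hden : 0 < t + θ * (lam - 1) * z := by nlinarith
  set w : ℝ := z * ((t - θ * z) / (t * (t + θ * (lam - 1) * z))) with hw
  have hwneg : w < 0 := by
    apply mul_neg_of_neg_of_pos hz2
    exact div_pos (by nlinarith) (mul_pos ht hden)
  have hA : 1 ≤ 1 + θ * (1 - lam) * w := by
    have h1 : 0 ≤ -(θ * (1 - lam)) * -w :=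
      mul_nonneg (by nlinarith) (by linarith)
    have : 0 ≤ θ * (1 - lam) * w := by nlinarith
    linarith
  have htne : t ≠ 0 := ht.ne'
  have hdenne : t + θ * (lam - 1) * z ≠ 0 := hden.ne'
  have key : (1 + θ * (1 - lam) * w) ^ 2 - 4 * θ * w
      = (1 + θ * (1 - lam) * w - 2 * θ * z / t) ^ 2 := by
    rw [hw]
    have h2 : t + θ * z * (lam - 1) ≠ 0 := by intro h; apply hdenne; linear_combination h
    field_simp
    ring
  have hnn : 0 ≤ 1 + θ * (1 - lam) * w - 2 * θ * z / t := by
    have : 2 * θ * z / t < 0 := div_neg_of_neg_of_pos (by nlinarith) ht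
    linarith
  simp only
  rw [key, Real.sqrt_sq hnn]
  field_simp
  ring
end
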